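/- arXiv:1610.09065 — 3 statements merged into one kernel-verified Lean document; each statement's English description precedes it below -/
import Mathlib

section
/- Let k ≥ 1, let λ ∈ ℂ be nonzero, let μ ∈ ℂ be a fixed k-th root of λ, let ζ_k = e^{2πi/k}, and let f_λ(x,y) = x^{2k} + (2k choose k) λ x^k y^k + y^{2k}. Then f_λ(x,y) = (1 − λ^2) y^{2k} + (1/k) Σ_{i=0}^{k−1} (x + μ ζ_k^i y)^{2k}; moreover L_ℂ(f_λ) = k if λ = ±1 (in which case this representation of length k is unique up to order and scaling of the linear forms), and L_ℂ(f_λ) = k + 1 if λ ≠ ±1. -/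
open MvPolynomial Finset

/-- The linear form `a*x + b*y` as a binary polynomial over `ℂ`. -/
noncomputable def lform (a b : ℂ) : MvPolynomial (Fin 2) ℂ := C a * X 0 + C b * X 1

/-- The `K`-rank of a binary form `p`: the least `r` such that `p` is a `K`-linear
combination of `r` d-th powers of linear forms with coefficients in `K`. -/
noncomputable def rankIn (K : Subfield ℂ) (d : ℕ) (p : MvPolynomial (Fin 2) ℂ) : ℕ :=
  sInf {r : ℕ | ∃ lam a b : Fin r → ℂ, (∀ j, lam j ∈ K ∧ a j ∈ K ∧ b j ∈ K) ∧
    p = ∑ j, C (lam j) * lform (a j) (b j) ^ d}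

/-- The Waring rank `L_ℂ` of a binary form. -/
noncomputable def rankC (d : ℕ) (p : MvPolynomial (Fin 2) ℂ) : ℕ :=
  sInf {r : ℕ | ∃ lam a b : Fin r → ℂ, p = ∑ j, C (lam j) * lform (a j) (b j) ^ d}

/-- Single partial derivative as a plain function. -/
noncomputable def pd (i : Fin 2) (p : MvPolynomial (Fin 2) ℂ) : MvPolynomial (Fin 2) ℂ :=
  pderiv i p

/-- `apolar h p = h(D) p`, the differential operator of `h` applied to `p`. -/
noncomputable def apolar (h p : MvPolynomial (Fin 2) ℂ) : MvPolynomial (Fin 2) ℂ :=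
  ∑ m ∈ h.support, h.coeff m • ((pd 0)^[m 0] ((pd 1)^[m 1] p))

/-- The subfield of `ℂ` generated by a subfield `K` and a set `S`. -/
noncomputable def adj (K : Subfield ℂ) (S : Set ℂ) : Subfield ℂ := Subfield.closure (↑K ∪ S)

/-- `z` and `w` are conjugate over `K` in `K(s)`: `z = a + b s`, `w = a - b s` with `a, b ∈ K`. -/
def conjPair (K : Subfield ℂ) (s z w : ℂ) : Prop :=
  ∃ a b : ℂ, a ∈ K ∧ b ∈ K ∧ z = a + b * s ∧ w = a - b * s

noncomputable def lformR (a b : ℝ) : MvPolynomial (Fin 2) ℝ := C a * X 0 + C b * X 1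

noncomputable def rankR (d : ℕ) (p : MvPolynomial (Fin 2) ℝ) : ℕ :=
  sInf {r : ℕ | ∃ lam a b : Fin r → ℝ, p = ∑ j, C (lam j) * lformR (a j) (b j) ^ d}


/-!
Averaging `(x + μ ζ^i y)^(2k)` over `i < k` keeps exactly the monomials `x^(2k-m) y^m` with
`k ∣ m`, i.e. `m ∈ {0, k, 2k}`, which gives the identity and hence the upper bounds on the rank.

The lower bounds are Sylvester's apolarity argument. If `f = Σ_{j ∈ s} c_j (a_j x + b_j y)^(2k)`
with `#s ≤ k`, linear algebra gives a nonzero form `g = Σ_{m ≤ #s} e_m x^m y^(k-m)`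
vanishing at every `(b_j, a_j)`. The moments `S_i = Σ_j c_j b_j^i a_j^(2k-i)` are the
coefficients of `f` divided by binomials, and `g(b_j, a_j) = 0` yields the Hankel relations
`Σ_m e_m S_(m+t) = 0`. For `f_λ` we have `S = 1, λ, 1` at `i = 0, k, 2k` and `0` elsewhere,
which forces `g = e_k (x^k - λ y^k)` with `e_k ≠ 0`, hence `#s = k`, `λ² = 1` and
`b_j^k = λ a_j^k` for every `j`. So each `b_j / a_j` is some `μ ζ^i`; merging the terms with
equal ratio gives a representation with fewer terms unless these ratios are distinct.
-/

noncomputable def flam (k : ℕ) (lam : ℂ) : MvPolynomial (Fin 2) ℂ :=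
  X 0 ^ (2 * k) + C (((2 * k).choose k : ℂ) * lam) * X 0 ^ k * X 1 ^ k + X 1 ^ (2 * k)

theorem IsPrimitiveRoot.sum_range_pow_pow {R : Type*} [Field R] {k : ℕ} {ζ : R}
    (hζ : IsPrimitiveRoot ζ k) (m : ℕ) :
    ∑ i ∈ range k, (ζ ^ m) ^ i = if k ∣ m then (k : R) else 0 := by
  split_ifs with h
  · obtain ⟨m, rfl⟩ := h
    simp [pow_mul, hζ.pow_eq_one]
  · have hne : ζ ^ m ≠ 1 := mt (hζ.pow_eq_one_iff_dvd m).mp h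
    rw [geom_sum_eq hne, ← pow_mul, mul_comm, pow_mul, hζ.pow_eq_one, one_pow, sub_self,
      zero_div]

theorem IsPrimitiveRoot.exists_eq_pow_mul_of_pow_eq_pow {R : Type*} [CommRing R] [IsDomain R]
    {k : ℕ} {ζ : R} (hζ : IsPrimitiveRoot ζ k) (hk : 0 < k) {x y : R} (h : x ^ k = y ^ k) :
    ∃ i < k, x = ζ ^ i * y := by
  have hx : x ∈ Polynomial.nthRoots k (y ^ k) := (Polynomial.mem_nthRoots hk).mpr h
  rw [hζ.nthRoots_eq rfl] at hx
  obtain ⟨i, hi, rfl⟩ := Multiset.mem_map.mp hx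
  exact ⟨i, Multiset.mem_range.mp hi, rfl⟩

theorem lform_mul (t a b : ℂ) : lform (t * a) (t * b) = C t * lform a b := by
  simp only [lform, map_mul]; ring

theorem lform_one_pow (w : ℂ) (n : ℕ) :
    lform 1 w ^ n =
      ∑ m ∈ range (n + 1), C ((n.choose m : ℂ) * w ^ m) * X 0 ^ (n - m) * X 1 ^ m := by
  rw [lform, C_1, one_mul, add_comm, add_pow]
  refine sum_congr rfl fun m _ => ?_
  simp only [map_mul, map_pow, map_natCast, mul_pow]
  ring

theorem sum_lform_one_mul_pow_pow {k : ℕ} {ζ : ℂ} (hζ : IsPrimitiveRoot ζ k) (w : ℂ)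
    (n : ℕ) :
    ∑ i ∈ range k, lform 1 (w * ζ ^ i) ^ n =
      ∑ m ∈ range (n + 1) with k ∣ m,
        C (k * (n.choose m : ℂ) * w ^ m) * X 0 ^ (n - m) * X 1 ^ m := by
  simp_rw [lform_one_pow, sum_filter]
  rw [sum_comm]
  refine sum_congr rfl fun m _ => ?_
  have hroots : ∑ i ∈ range k, (w * ζ ^ i) ^ m = w ^ m * if k ∣ m then (k : ℂ) else 0 := by
    simp_rw [mul_pow, ← pow_mul, mul_comm _ m, pow_mul]
    rw [← mul_sum, hζ.sum_range_pow_pow]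
  rw [← sum_mul, ← sum_mul, ← map_sum, ← mul_sum, hroots]
  split_ifs
  · congr 3; ring
  · simp

theorem filter_dvd_range_two_mul_add_one {k : ℕ} (hk : 0 < k) :
    {m ∈ range (2 * k + 1) | k ∣ m} = {0, k, 2 * k} := by
  ext m
  simp only [mem_filter, mem_range, mem_insert, mem_singleton]
  constructor
  · rintro ⟨hm, d, rfl⟩
    have : d < 3 := by nlinarith
    interval_cases d <;> omega
  · rintro (rfl | rfl | rfl) <;> exact ⟨by omega, by simp⟩

theorem flam_eq_sum {k : ℕ} (hk : 0 < k) {ζ : ℂ} (hζ : IsPrimitiveRoot ζ k) {lam mu : ℂ}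
    (hmu : mu ^ k = lam) :
    flam k lam = C (1 - lam ^ 2) * X 1 ^ (2 * k)
      + C (1 / (k : ℂ)) * ∑ i ∈ range k, lform 1 (mu * ζ ^ i) ^ (2 * k) := by
  have hk' : (k : ℂ) ≠ 0 := Nat.cast_ne_zero.mpr hk.ne'
  rw [sum_lform_one_mul_pow_pow hζ, filter_dvd_range_two_mul_add_one hk,
    sum_insert (by simp; omega), sum_insert (by simp; omega), sum_singleton, flam]
  simp only [Nat.choose_zero_right, Nat.choose_self, Nat.sub_zero, Nat.sub_self,
    show 2 * k - k = k by omega, pow_zero, mul_one, Nat.cast_one, hmu,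
    show mu ^ (2 * k) = lam ^ 2 by rw [mul_comm, pow_mul, hmu]]
  have hCk : C (1 / (k : ℂ)) * C (k : ℂ) = (1 : MvPolynomial (Fin 2) ℂ) := by
    rw [← C_mul, one_div_mul_cancel hk', C_1]
  simp only [C_mul, map_sub, map_one]
  linear_combination (-(X 0 ^ (2 * k) + C ((2 * k).choose k : ℂ) * C lam * X 0 ^ k * X 1 ^ k
    + C (lam ^ 2) * X 1 ^ (2 * k))) * hCk

theorem Polynomial.coeff_C_add_C_mul_X_pow {R : Type*} [CommSemiring R] (a b : R) (n i : ℕ) :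
    ((Polynomial.C a + Polynomial.C b * Polynomial.X) ^ n).coeff i =
      n.choose i * b ^ i * a ^ (n - i) := by
  have hexp : (Polynomial.C a + Polynomial.C b * Polynomial.X) ^ n = ∑ m ∈ range (n + 1),
      Polynomial.C (n.choose m * b ^ m * a ^ (n - m)) * Polynomial.X ^ m := by
    rw [add_comm, add_pow]
    refine sum_congr rfl fun m _ => ?_
    simp only [mul_pow, map_mul, map_pow, map_natCast]
    ring
  rw [hexp, Polynomial.finsetSum_coeff]
  simp only [Polynomial.coeff_C_mul_X_pow, sum_ite_eq, mem_range]
  split_ifs with hi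
  · rfl
  · rw [Nat.choose_eq_zero_of_lt (by omega), Nat.cast_zero, zero_mul, zero_mul]

def moment {ι : Type*} (s : Finset ι) (c a b : ι → ℂ) (n i : ℕ) : ℂ :=
  ∑ j ∈ s, c j * b j ^ i * a j ^ (n - i)

theorem coeff_aeval_sum_lform_pow {ι : Type*} (s : Finset ι) (c a b : ι → ℂ) (n i : ℕ) :
    (aeval ![1, Polynomial.X] (∑ j ∈ s, C (c j) * lform (a j) (b j) ^ n)).coeff i =
      n.choose i * moment s c a b n i := by
  simp only [map_sum, map_mul, map_pow, lform, map_add, aeval_C, aeval_X,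
    Polynomial.algebraMap_eq, Matrix.cons_val_zero, Matrix.cons_val_one, mul_one,
    Polynomial.finsetSum_coeff, Polynomial.coeff_C_mul, Polynomial.coeff_C_add_C_mul_X_pow,
    moment, mul_sum]
  exact sum_congr rfl fun j _ => by ring

theorem coeff_aeval_flam (k : ℕ) (lam : ℂ) (i : ℕ) :
    (aeval ![1, Polynomial.X] (flam k lam)).coeff i =
      (if i = 0 then 1 else 0) + (if i = k then ((2 * k).choose k : ℂ) * lam else 0)
        + (if i = 2 * k then 1 else 0) := by
  simp only [flam, map_add, map_mul, map_pow, aeval_C, aeval_X, Polynomial.algebraMap_eq,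
    Matrix.cons_val_zero, Matrix.cons_val_one, one_pow, mul_one, one_mul, mul_assoc,
    Polynomial.coeff_add, Polynomial.coeff_one, Polynomial.coeff_C_mul, Polynomial.coeff_X_pow,
    mul_ite, mul_zero]

theorem moment_of_flam_eq {k : ℕ} {lam : ℂ} {ι : Type*} {s : Finset ι}
    {c a b : ι → ℂ} (h : flam k lam = ∑ j ∈ s, C (c j) * lform (a j) (b j) ^ (2 * k))
    {i : ℕ} (hi : i ≤ 2 * k) :
    moment s c a b (2 * k) i =
      (if i = 0 then 1 else 0) + (if i = k then lam else 0) + (if i = 2 * k then 1 else 0) := by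
  have hcoeff := coeff_aeval_flam k lam i
  rw [h, coeff_aeval_sum_lform_pow] at hcoeff
  have hch : ((2 * k).choose i : ℂ) ≠ 0 := Nat.cast_ne_zero.mpr (Nat.choose_pos hi).ne'
  refine mul_left_cancel₀ hch (hcoeff.trans ?_)
  split_ifs <;> simp_all

theorem exists_ne_zero_forall_sum_eq_zero {ι : Type*} (s : Finset ι) (a b : ι → ℂ) {r : ℕ}
    (hs : s.card ≤ r) :
    ∃ e : ℕ → ℂ, (∃ m ≤ s.card, e m ≠ 0) ∧ (∀ m, s.card < m → e m = 0) ∧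
      ∀ j ∈ s, ∑ m ∈ range (r + 1), e m * b j ^ m * a j ^ (r - m) = 0 := by
  set N := s.card
  let M : Matrix s (Fin (N + 1)) ℂ := fun j m => b j ^ (m : ℕ) * a j ^ (r - m)
  have hker : LinearMap.ker M.mulVecLin ≠ ⊥ := LinearMap.ker_ne_bot_of_finrank_lt (by simp [N])
  obtain ⟨w, hw, hw0⟩ := (Submodule.ne_bot_iff _).mp hker
  set e : ℕ → ℂ := fun m => if h : m < N + 1 then w ⟨m, h⟩ else 0
  have he : ∀ m, N < m → e m = 0 := fun m hm => dif_neg (by omega)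
  refine ⟨e, ?_, he, fun j hj => ?_⟩
  · obtain ⟨m, hm⟩ := Function.ne_iff.mp hw0
    exact ⟨m, by omega, by rwa [show e m = w m from dif_pos m.is_lt]⟩
  · calc ∑ m ∈ range (r + 1), e m * b j ^ m * a j ^ (r - m)
        = ∑ m ∈ range (N + 1), e m * b j ^ m * a j ^ (r - m) := by
          refine (sum_subset (range_subset_range.mpr (by omega)) fun m _ hm => ?_).symm
          rw [he m (by simpa using hm), zero_mul, zero_mul]
      _ = ∑ m, M ⟨j, hj⟩ m * w m := by
          rw [← Fin.sum_univ_eq_sum_range]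
          refine sum_congr rfl fun m _ => ?_
          simp only [e, M, Fin.is_lt, dif_pos, Fin.eta]
          ring
      _ = 0 := congrFun (LinearMap.mem_ker.mp hw) _

theorem sum_mul_moment_eq_zero {ι : Type*} {s : Finset ι} {c a b : ι → ℂ} {e : ℕ → ℂ}
    {r n t : ℕ} (hrt : r + t ≤ n)
    (he : ∀ j ∈ s, ∑ m ∈ range (r + 1), e m * b j ^ m * a j ^ (r - m) = 0) :
    ∑ m ∈ range (r + 1), e m * moment s c a b n (m + t) = 0 := by
  simp_rw [moment, mul_sum]
  rw [sum_comm]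
  refine sum_eq_zero fun j hj => ?_
  calc ∑ m ∈ range (r + 1), e m * (c j * b j ^ (m + t) * a j ^ (n - (m + t)))
      = c j * b j ^ t * a j ^ (n - r - t) *
          ∑ m ∈ range (r + 1), e m * b j ^ m * a j ^ (r - m) := by
        rw [mul_sum]
        refine sum_congr rfl fun m hm => ?_
        rw [show n - (m + t) = (r - m) + (n - r - t) by simp at hm; omega, pow_add, pow_add]
        ring
    _ = 0 := by rw [he j hj, mul_zero]

theorem sum_mul_moment_of_flam_eq {k : ℕ} {lam : ℂ} {ι : Type*} {s : Finset ι}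
    {c a b : ι → ℂ} (h : flam k lam = ∑ j ∈ s, C (c j) * lform (a j) (b j) ^ (2 * k))
    (e : ℕ → ℂ) {t : ℕ} (ht : t ≤ k) :
    ∑ m ∈ range (k + 1), e m * moment s c a b (2 * k) (m + t) =
      (if t = 0 then e 0 else 0) + lam * e (k - t) + (if t = k then e k else 0) := by
  have hS : ∀ m ∈ range (k + 1), e m * moment s c a b (2 * k) (m + t) =
      (if m = 0 then (if t = 0 then e m else 0) else 0) + (if m = k - t then lam * e m else 0)
        + (if m = k then (if t = k then e m else 0) else 0) := fun m hm => by
    rw [mem_range] at hm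
    rw [moment_of_flam_eq h (by omega)]
    simp only [show m + t = 0 ↔ m = 0 ∧ t = 0 by omega, show m + t = k ↔ m = k - t by omega,
      show m + t = 2 * k ↔ m = k ∧ t = k by omega, ite_and, mul_add, mul_ite, mul_one, mul_zero,
      mul_comm (e m) lam]
  rw [sum_congr rfl hS, sum_add_distrib, sum_add_distrib, sum_ite_eq', sum_ite_eq', sum_ite_eq']
  simp [show k - t < k + 1 by omega]

theorem coeffs_of_annihilator_of_flam_eq {k : ℕ} (hk : 0 < k) {lam : ℂ}
    (hlam : lam ≠ 0) {ι : Type*} {s : Finset ι} {c a b : ι → ℂ}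
    (h : flam k lam = ∑ j ∈ s, C (c j) * lform (a j) (b j) ^ (2 * k)) {e : ℕ → ℂ}
    (he : ∀ j ∈ s, ∑ m ∈ range (k + 1), e m * b j ^ m * a j ^ (k - m) = 0) :
    (∀ m, 0 < m → m < k → e m = 0) ∧ e 0 = -(lam * e k) ∧ e k * (lam ^ 2 - 1) = 0 := by
  have hrel : ∀ t ≤ k,
      (if t = 0 then e 0 else 0) + lam * e (k - t) + (if t = k then e k else 0) = 0 :=
    fun t ht => by
      rw [← sum_mul_moment_of_flam_eq h e ht]
      exact sum_mul_moment_eq_zero (by omega) he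
  have h0 : e 0 + lam * e k = 0 := by simpa [hk.ne] using hrel 0 k.zero_le
  have hk' : lam * e 0 + e k = 0 := by simpa [hk.ne'] using hrel k le_rfl
  refine ⟨fun m h0 hmk => ?_, by linear_combination h0, by linear_combination lam * h0 - hk'⟩
  have := hrel (k - m) (by omega)
  rw [if_neg (by omega), if_neg (by omega), show k - (k - m) = m by omega] at this
  simpa [hlam] using this

theorem card_eq_and_pow_eq_of_flam_eq {k : ℕ} (hk : 0 < k) {lam : ℂ} (hlam : lam ≠ 0)
    {ι : Type*} {s : Finset ι} {c a b : ι → ℂ}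
    (h : flam k lam = ∑ j ∈ s, C (c j) * lform (a j) (b j) ^ (2 * k)) (hs : s.card ≤ k) :
    s.card = k ∧ lam ^ 2 = 1 ∧ ∀ j ∈ s, b j ^ k = lam * a j ^ k := by
  obtain ⟨e, ⟨m₀, hm₀, he₀⟩, hsupp, hann⟩ :=
    exists_ne_zero_forall_sum_eq_zero s a b hs
  obtain ⟨hmid, he0, hsq⟩ := coeffs_of_annihilator_of_flam_eq hk hlam h hann
  have hek : e k ≠ 0 := by
    intro hek
    apply he₀
    rcases Nat.eq_zero_or_pos m₀ with rfl | hm0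
    · rw [he0, hek, mul_zero, neg_zero]
    · rcases (hm₀.trans hs).lt_or_eq with hmk | rfl
      · exact hmid m₀ hm0 hmk
      · exact hek
  have hform : ∀ x y : ℂ,
      ∑ m ∈ range (k + 1), e m * x ^ m * y ^ (k - m) = e k * (x ^ k - lam * y ^ k) := by
    intro x y
    rw [← sum_subset (s₁ := {0, k}) (by intro m; simp; omega) fun m hm hm' => ?_,
      sum_pair hk.ne, he0]
    · simp only [pow_zero, mul_one, Nat.sub_zero, Nat.sub_self]
      ring
    · simp at hm hm'
      rw [hmid m (by omega) (by omega), zero_mul, zero_mul]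
  refine ⟨le_antisymm hs (not_lt.mp fun hlt => hek (hsupp k hlt)), ?_, fun j hj => ?_⟩
  · linear_combination (mul_eq_zero.mp hsq).resolve_left hek
  · have := hann j hj
    rw [hform] at this
    linear_combination (mul_eq_zero.mp this).resolve_left hek

theorem le_card_of_flam_eq {k : ℕ} (hk : 0 < k) {lam : ℂ} (hlam : lam ≠ 0)
    {ι : Type*} {s : Finset ι} {c a b : ι → ℂ}
    (h : flam k lam = ∑ j ∈ s, C (c j) * lform (a j) (b j) ^ (2 * k)) : k ≤ s.card := by
  by_contra! hlt
  exact hlt.ne (card_eq_and_pow_eq_of_flam_eq hk hlam h hlt.le).1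

theorem lt_card_of_flam_eq {k : ℕ} (hk : 0 < k) {lam : ℂ} (hlam : lam ≠ 0)
    (hlam2 : lam ^ 2 ≠ 1) {ι : Type*} {s : Finset ι} {c a b : ι → ℂ}
    (h : flam k lam = ∑ j ∈ s, C (c j) * lform (a j) (b j) ^ (2 * k)) : k < s.card := by
  by_contra! hle
  exact hlam2 (card_eq_and_pow_eq_of_flam_eq hk hlam h hle).2.1

theorem exists_perm_of_flam_eq {k : ℕ} (hk : 0 < k) {lam mu ζ : ℂ} (hlam : lam ≠ 0)
    (hmu : mu ^ k = lam) (hζ : IsPrimitiveRoot ζ k) {c a b : Fin k → ℂ}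
    (h : flam k lam = ∑ j, C (c j) * lform (a j) (b j) ^ (2 * k)) :
    ∃ σ : Equiv.Perm (Fin k), ∀ j, a j ≠ 0 ∧ b j = a j * (mu * ζ ^ (σ j : ℕ)) := by
  classical
  have hpow := (card_eq_and_pow_eq_of_flam_eq hk hlam h (by simp)).2.2
  have hroot : ∀ j, ∃ i : Fin k, b j = a j * (mu * ζ ^ (i : ℕ)) := fun j => by
    obtain ⟨i, hi, hb⟩ := hζ.exists_eq_pow_mul_of_pow_eq_pow hk (x := b j) (y := a j * mu)
      (by rw [hpow j (mem_univ j), mul_pow, hmu, mul_comm])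
    exact ⟨⟨i, hi⟩, by rw [hb]; ring⟩
  choose σ hσ using hroot
  set J : Finset (Fin k) := {j | a j ≠ 0}
  have hmerge : flam k lam = ∑ i ∈ J.image σ,
      C (∑ j ∈ J with σ j = i, c j * a j ^ (2 * k)) *
        lform 1 (mu * ζ ^ (i : ℕ)) ^ (2 * k) := by
    have hterm : ∀ j, C (c j) * lform (a j) (b j) ^ (2 * k) =
        C (c j * a j ^ (2 * k)) * lform 1 (mu * ζ ^ (σ j : ℕ)) ^ (2 * k) := fun j => by
      have hscale := lform_mul (a j) 1 (mu * ζ ^ (σ j : ℕ))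
      rw [mul_one] at hscale
      rw [hσ j, hscale, mul_pow, map_mul, map_pow, mul_assoc]
    rw [h, sum_image' _ fun j hj => ?_]
    · simp_rw [hterm]
      refine (sum_filter_of_ne fun j _ hj => ?_).symm
      rintro (ha : a j = 0)
      simp [ha, hk.ne'] at hj
    · rw [map_sum, sum_mul]
      exact sum_congr rfl fun j' hj' => by rw [(mem_filter.mp hj').2]
  have hcard := le_card_of_flam_eq hk hlam hmerge
  have hJ : J.card = k :=
    le_antisymm ((card_le_univ J).trans_eq (Fintype.card_fin k)) (hcard.trans card_image_le)
  have hJuniv : J = univ := eq_univ_of_card J (hJ.trans (Fintype.card_fin k).symm)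
  have hinj : Set.InjOn σ J := card_image_iff.mp (le_antisymm card_image_le (hJ.trans_le hcard))
  rw [hJuniv, coe_univ, Set.injOn_univ] at hinj
  refine ⟨.ofBijective σ (Finite.injective_iff_bijective.mp hinj), fun j => ⟨?_, hσ j⟩⟩
  have hj : j ∈ J := hJuniv ▸ mem_univ j
  simpa [J] using hj

theorem rankC_flam_of_sq_eq_one {k : ℕ} (hk : 0 < k) {lam mu ζ : ℂ} (hlam : lam ≠ 0)
    (hlam2 : lam ^ 2 = 1) (hmu : mu ^ k = lam) (hζ : IsPrimitiveRoot ζ k) :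
    rankC (2 * k) (flam k lam) = k := by
  refine IsLeast.csInf_eq ⟨⟨fun _ => 1 / k, fun _ => 1, fun i => mu * ζ ^ (i : ℕ), ?_⟩,
    fun r ⟨c, a, b, h⟩ => by simpa using le_card_of_flam_eq hk hlam h⟩
  rw [flam_eq_sum hk hζ hmu, hlam2, sub_self, map_zero, zero_mul, zero_add, mul_sum]
  exact (Fin.sum_univ_eq_sum_range
    (fun i => C (1 / (k : ℂ)) * lform 1 (mu * ζ ^ i) ^ (2 * k)) k).symm

theorem rankC_flam_of_sq_ne_one {k : ℕ} (hk : 0 < k) {lam mu ζ : ℂ} (hlam : lam ≠ 0)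
    (hlam2 : lam ^ 2 ≠ 1) (hmu : mu ^ k = lam) (hζ : IsPrimitiveRoot ζ k) :
    rankC (2 * k) (flam k lam) = k + 1 := by
  refine IsLeast.csInf_eq ⟨⟨Fin.cons (1 - lam ^ 2) fun _ => 1 / k, Fin.cons 0 fun _ => 1,
    Fin.cons 1 fun i => mu * ζ ^ (i : ℕ), ?_⟩,
    fun r ⟨c, a, b, h⟩ => by simpa using lt_card_of_flam_eq hk hlam hlam2 h⟩
  rw [Fin.sum_univ_succ, flam_eq_sum hk hζ hmu, mul_sum,
    ← Fin.sum_univ_eq_sum_range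
      (fun i => C (1 / (k : ℂ)) * lform 1 (mu * ζ ^ i) ^ (2 * k)) k]
  simp [lform]

/-- Minimal complex representations of `f_λ = x^(2k) + (2k choose k) λ x^k y^k + y^(2k)`:
`f_λ = (1 - λ²) y^(2k) + (1/k) Σ_{i<k} (x + μ ζ_k^i y)^(2k)` where `μ^k = λ`; moreover
`L_ℂ(f_λ) = k` if `λ = ±1` (with this length-`k` representation unique up to order and
scaling) and `L_ℂ(f_λ) = k + 1` otherwise. -/
theorem complex_rank_flambda (k : ℕ) (hk : 1 ≤ k) (lam : ℂ) (hlam : lam ≠ 0)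
    (mu : ℂ) (hmu : mu ^ k = lam)
    (ζ : ℂ) (hζ : ζ = Complex.exp (2 * Real.pi * Complex.I / k))
    (f : MvPolynomial (Fin 2) ℂ)
    (hf : f = X 0 ^ (2 * k) + C (((2 * k).choose k : ℂ) * lam) * X 0 ^ k * X 1 ^ k
      + X 1 ^ (2 * k)) :
    f = C (1 - lam ^ 2) * X 1 ^ (2 * k)
        + C (1 / (k : ℂ)) * ∑ i ∈ range k, lform 1 (mu * ζ ^ i) ^ (2 * k) ∧
    ((lam = 1 ∨ lam = -1) → rankC (2 * k) f = k ∧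
      ∀ c a b : Fin k → ℂ, f = ∑ j, C (c j) * lform (a j) (b j) ^ (2 * k) →
        ∃ σ : Equiv.Perm (Fin k), ∀ j, ∃ t : ℂ, t ≠ 0 ∧
          a j = t ∧ b j = t * (mu * ζ ^ (σ j : ℕ))) ∧
    ((lam ≠ 1 ∧ lam ≠ -1) → rankC (2 * k) f = k + 1) := by
  obtain rfl : f = flam k lam := hf
  have hprim : IsPrimitiveRoot ζ k := hζ ▸ Complex.isPrimitiveRoot_exp k (by omega)
  refine ⟨flam_eq_sum hk hprim hmu, fun hpm => ⟨?_, fun c a b h => ?_⟩, fun hne => ?_⟩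
  · exact rankC_flam_of_sq_eq_one hk hlam (sq_eq_one_iff.mpr hpm) hmu hprim
  · obtain ⟨σ, hσ⟩ := exists_perm_of_flam_eq hk hlam hmu hprim h
    exact ⟨σ, fun j => ⟨a j, (hσ j).1, rfl, (hσ j).2⟩⟩
  · exact rankC_flam_of_sq_ne_one hk hlam (sq_ne_one_iff.mpr hne) hmu hprim
end

section
/- Let K ⊆ ℂ be a field, let d ≥ 5, and suppose f(x,y) = λ_1(α_1 x + β_1 y)^d + λ_2 x^d + λ_3 y^d ∈ K[x,y], where λ_1, λ_2, λ_3, α_1, β_1 ∈ ℂ are all nonzero. Then L_K(f) = 3, and this is the projectively unique representation of f of length 3 (any representation of f as a K-linear combination of three d-th powers of linear forms uses the same three linear forms up to scaling). -/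
open MvPolynomial Finset

/-!
The operator `q₁ ∂_y - q₂ ∂_x` sends `(p₁x + p₂y)^n` to `n (q ∧ p) (p₁x + p₂y)^(n-1)`, so it
kills exactly the powers of forms proportional to `q`. If `f` had a second representation by at
most three forms, moving everything to one side gives a vanishing combination of at most
`6 ≤ d + 1` powers; applying the product of these operators over all forms but one of the three
given ones leaves a nonzero multiple of a power of that form, a contradiction unless that form
reappears. This yields both `L_K(f) ≥ 3` and uniqueness. That the given representation is
defined over `K` (after normalizing `α₁x + β₁y` to `x + (β₁/α₁)y`) is read off the coefficients of
`x^d`, `x^(d-1)y`, `x^(d-2)y²` and `y^d`.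
-/

def wedge (p q : ℂ × ℂ) : ℂ := p.1 * q.2 - p.2 * q.1

lemma wedge_self (p : ℂ × ℂ) : wedge p p = 0 := by
  rw [wedge, mul_comm, sub_self]

lemma wedge_eq_zero_of_wedge_eq_zero {p q r : ℂ × ℂ} (hr : r ≠ 0)
    (hp : wedge r p = 0) (hq : wedge r q = 0) : wedge p q = 0 := by
  have h₁ : wedge p q * r.1 = 0 := by unfold wedge at *; linear_combination p.1 * hq - q.1 * hp
  have h₂ : wedge p q * r.2 = 0 := by unfold wedge at *; linear_combination p.2 * hq - q.2 * hp
  by_contra h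
  exact hr (Prod.ext ((mul_eq_zero.1 h₁).resolve_left h) ((mul_eq_zero.1 h₂).resolve_left h))

lemma exists_eq_mul_of_wedge_eq_zero {p q : ℂ × ℂ} (hp : p ≠ 0) (hq : q ≠ 0)
    (h : wedge p q = 0) : ∃ c : ℂ, c ≠ 0 ∧ p.1 = c * q.1 ∧ p.2 = c * q.2 := by
  unfold wedge at h
  obtain ⟨c, hc₁, hc₂⟩ : ∃ c : ℂ, p.1 = c * q.1 ∧ p.2 = c * q.2 := by
    by_cases hq₁ : q.1 = 0
    · have hq₂ : q.2 ≠ 0 := fun hq₂ => hq (Prod.ext hq₁ hq₂)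
      refine ⟨p.2 / q.2, ?_, by field_simp⟩
      field_simp
      linear_combination h
    · refine ⟨p.1 / q.1, by field_simp, ?_⟩
      field_simp
      linear_combination -h
  refine ⟨c, ?_, hc₁, hc₂⟩
  rintro rfl
  exact hp (Prod.ext (by simpa using hc₁) (by simpa using hc₂))

lemma pderiv_zero_lform (a b : ℂ) : pderiv 0 (lform a b) = C a := by simp [lform]

lemma pderiv_one_lform (a b : ℂ) : pderiv 1 (lform a b) = C b := by simp [lform]

lemma lform_ne_zero {p : ℂ × ℂ} (hp : p ≠ 0) : lform p.1 p.2 ≠ 0 := by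
  intro h
  have h₁ := pderiv_zero_lform p.1 p.2
  have h₂ := pderiv_one_lform p.1 p.2
  rw [h, map_zero, eq_comm, C_eq_zero] at h₁ h₂
  exact hp (Prod.ext h₁ h₂)

noncomputable def perpDeriv (q : ℂ × ℂ) : Module.End ℂ (MvPolynomial (Fin 2) ℂ) :=
  q.1 • (pderiv 1).toLinearMap - q.2 • (pderiv 0).toLinearMap

lemma perpDeriv_lform_pow (p q : ℂ × ℂ) (n : ℕ) :
    perpDeriv q (lform p.1 p.2 ^ n) = ((n : ℂ) * wedge q p) • lform p.1 p.2 ^ (n - 1) := by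
  simp only [perpDeriv, LinearMap.sub_apply, LinearMap.smul_apply, Derivation.coeFn_coe,
    Derivation.leibniz_pow, pderiv_zero_lform, pderiv_one_lform, wedge, smul_eq_C_mul,
    nsmul_eq_mul, map_mul, map_sub]
  rw [← map_natCast C]
  ring

noncomputable def perpDerivs (L : List (ℂ × ℂ)) : Module.End ℂ (MvPolynomial (Fin 2) ℂ) :=
  (L.map perpDeriv).prod

lemma perpDerivs_lform_pow (L : List (ℂ × ℂ)) (p : ℂ × ℂ) (n : ℕ) :
    perpDerivs L (lform p.1 p.2 ^ n) =
      ((n.descFactorial L.length : ℂ) * (L.map (wedge · p)).prod) •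
        lform p.1 p.2 ^ (n - L.length) := by
  induction L with
  | nil => simp [perpDerivs]
  | cons q L ih =>
    rw [perpDerivs, List.map_cons, List.prod_cons, Module.End.mul_apply, ← perpDerivs, ih,
      map_smul, perpDeriv_lform_pow, smul_smul, List.length_cons, Nat.descFactorial_succ,
      Nat.sub_sub, List.map_cons, List.prod_cons]
    push_cast
    ring_nf

lemma coeff_eq_zero_of_sum_lform_pow_eq_zero {ι : Type*} {s : Finset ι} {d : ℕ}
    (hs : #s ≤ d + 1) {c : ι → ℂ} {v : ι → ℂ × ℂ}
    (h : ∑ j ∈ s, C (c j) * lform (v j).1 (v j).2 ^ d = 0) {i : ι} (hi : i ∈ s) (hvi : v i ≠ 0)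
    (hsep : ∀ j ∈ s, j ≠ i → wedge (v j) (v i) ≠ 0) :
    c i = 0 := by
  classical
  set L := (s.erase i).toList.map v
  have hL : L.length ≤ d := by
    simp only [L, List.length_map, length_toList, card_erase_of_mem hi]
    omega
  have hkill : ∀ j ∈ s, j ≠ i → perpDerivs L (C (c j) * lform (v j).1 (v j).2 ^ d) = 0 := by
    intro j hj hji
    have hvj : v j ∈ L := List.mem_map_of_mem (mem_toList.2 (mem_erase.2 ⟨hji, hj⟩))
    have hzero : (0 : ℂ) ∈ L.map (wedge · (v j)) := wedge_self (v j) ▸ List.mem_map_of_mem hvj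
    rw [C_mul', map_smul, perpDerivs_lform_pow, List.prod_eq_zero hzero, mul_zero, zero_smul,
      smul_zero]
  have hsurvive := congrArg (perpDerivs L) h
  rw [map_sum, map_zero, sum_eq_single_of_mem i hi hkill, C_mul', map_smul, perpDerivs_lform_pow,
    smul_smul] at hsurvive
  have hfact : (d.descFactorial L.length : ℂ) ≠ 0 :=
    Nat.cast_ne_zero.2 fun h0 => by rw [Nat.descFactorial_eq_zero_iff_lt] at h0; omega
  have hprod : (L.map (wedge · (v i))).prod ≠ 0 := by
    simp only [L, List.map_map, Ne, List.prod_eq_zero_iff, List.mem_map, mem_toList, mem_erase,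
      Function.comp_apply, not_exists, not_and]
    exact fun j ⟨hji, hj⟩ => hsep j hj hji
  exact (mul_eq_zero.1 ((smul_eq_zero.1 hsurvive).resolve_right
    (pow_ne_zero _ (lform_ne_zero hvi)))).resolve_right (mul_ne_zero hfact hprod)

section Matching

variable {ι κ : Type*} [Fintype ι] [Fintype κ] {d : ℕ} {lam : ι → ℂ} {P : ι → ℂ × ℂ}
  {μ : κ → ℂ} {w : κ → ℂ × ℂ}

lemma exists_wedge_eq_zero_of_sum_eq (hd : 0 < d)
    (hcard : Fintype.card ι + Fintype.card κ ≤ d + 1) (hlam : ∀ i, lam i ≠ 0)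
    (hP₀ : ∀ i, P i ≠ 0) (hP : Pairwise fun i i' => wedge (P i) (P i') ≠ 0)
    (h : ∑ i, C (lam i) * lform (P i).1 (P i).2 ^ d = ∑ j, C (μ j) * lform (w j).1 (w j).2 ^ d)
    (i : ι) : ∃ j, w j ≠ 0 ∧ wedge (w j) (P i) = 0 := by
  classical
  by_contra! hsep
  let c : ι ⊕ κ → ℂ := Sum.elim lam (-μ)
  let v : ι ⊕ κ → ℂ × ℂ := Sum.elim P w
  have hzero : ∑ x, C (c x) * lform (v x).1 (v x).2 ^ d = 0 := by
    simp [c, v, h]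
  -- zero forms contribute nothing; discarding them leaves `P i` non-proportional to all others
  rw [← sum_filter_of_ne (p := fun x => v x ≠ 0)] at hzero
  · refine hlam i
      (coeff_eq_zero_of_sum_lform_pow_eq_zero ?_ hzero (i := .inl i) ?_ (hP₀ i) ?_)
    · exact (card_filter_le _ _).trans (by simpa using hcard)
    · simpa [v] using hP₀ i
    · rintro (i' | j) hx hne
      · exact hP fun h => hne (congrArg _ h)
      · exact hsep j (by simpa [v] using hx)
  · intro x _ hx hvx
    simp [hvx, lform, zero_pow hd.ne'] at hx

lemma exists_injective_wedge_eq_zero_of_sum_eq (hd : 0 < d)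
    (hcard : Fintype.card ι + Fintype.card κ ≤ d + 1) (hlam : ∀ i, lam i ≠ 0)
    (hP₀ : ∀ i, P i ≠ 0) (hP : Pairwise fun i i' => wedge (P i) (P i') ≠ 0)
    (h : ∑ i, C (lam i) * lform (P i).1 (P i).2 ^ d = ∑ j, C (μ j) * lform (w j).1 (w j).2 ^ d) :
    ∃ g : ι → κ, Function.Injective g ∧ ∀ i, w (g i) ≠ 0 ∧ wedge (w (g i)) (P i) = 0 := by
  choose g hg₀ hg using exists_wedge_eq_zero_of_sum_eq hd hcard hlam hP₀ hP h
  refine ⟨g, fun i i' hii' => ?_, fun i => ⟨hg₀ i, hg i⟩⟩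
  by_contra hne
  exact hP hne (wedge_eq_zero_of_wedge_eq_zero (hg₀ i') (hii' ▸ hg i) (hg i'))

end Matching

lemma coeff_lform_pow (a b : ℂ) (d : ℕ) (s : Fin 2 →₀ ℕ) :
    coeff s (lform a b ^ d) =
      if s 0 + s 1 = d then d.choose (s 0) * a ^ s 0 * b ^ s 1 else 0 := by
  have hform : lform a b = ∑ i, ![a, b] i • X i := by
    simp [lform, Fin.sum_univ_two, smul_eq_C_mul]
  have hsum : s.sum (fun _ m ↦ m) = s 0 + s 1 := by
    simp [Finsupp.sum_of_support_subset s (subset_univ s.support)]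
  rw [hform, coeff_linearCombination_X_pow_of_fintype, hsum]
  split_ifs with hs
  · rw [Finsupp.multinomial_eq_of_support_subset (subset_univ s.support), univ_fin2,
      Nat.binomial_eq_choose Fin.zero_ne_one, hs, Finsupp.prod_fintype _ _ (fun _ => pow_zero _),
      Fin.prod_univ_two]
    simp [mul_assoc]
  · rfl

lemma coeff_trinomial (l₁ l₂ l₃ a b : ℂ) {d i j : ℕ} (h : i + j = d) :
    coeff (Finsupp.single 0 i + Finsupp.single 1 j)
        (C l₁ * lform a b ^ d + C l₂ * X 0 ^ d + C l₃ * X 1 ^ d) =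
      l₁ * (d.choose i * a ^ i * b ^ j) + (if j = 0 then l₂ else 0) +
        (if i = 0 then l₃ else 0) := by
  simp only [coeff_add, coeff_C_mul, coeff_lform_pow, coeff_X_pow, Finsupp.ext_iff,
    Fin.forall_fin_two, Finsupp.add_apply, Finsupp.single_apply, Fin.isValue, zero_ne_one,
    one_ne_zero, if_true, if_false, add_zero, zero_add, h, mul_ite, mul_one, mul_zero]
  split_ifs <;> first | omega | simp

lemma trinomial_params_mem {K : Subfield ℂ} {d : ℕ} (hd : 3 ≤ d) {l₁ l₂ l₃ a b : ℂ}
    (hl₁ : l₁ ≠ 0) (ha : a ≠ 0) (hb : b ≠ 0)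
    (hK : ∀ m, coeff m (C l₁ * lform a b ^ d + C l₂ * X 0 ^ d + C l₃ * X 1 ^ d) ∈ K) :
    b / a ∈ K ∧ l₁ * a ^ d ∈ K ∧ l₂ ∈ K ∧ l₃ ∈ K := by
  obtain ⟨n, rfl⟩ : ∃ n, d = n + 3 := ⟨d - 3, by omega⟩
  have hK' (i j : ℕ) (h : i + j = n + 3) := coeff_trinomial l₁ l₂ l₃ a b h ▸ hK _
  have hdiv (i j : ℕ) (h : i + j = n + 3) (hi : i ≠ 0) (hj : j ≠ 0) :
      l₁ * a ^ i * b ^ j ∈ K := by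
    have hc : ((n + 3).choose i : ℂ) ≠ 0 := Nat.cast_ne_zero.2 (Nat.choose_pos (by omega)).ne'
    convert div_mem (hK' i j h) (natCast_mem K ((n + 3).choose i)) using 1
    simp only [hi, hj, if_false, add_zero]
    field_simp
  have hu := hdiv (n + 2) 1 (by ring) (by omega) one_ne_zero
  have ht := hdiv (n + 1) 2 (by ring) (by omega) two_ne_zero
  have hba : b / a ∈ K := by
    convert div_mem ht hu using 1
    field_simp
    ring
  have hlead : l₁ * a ^ (n + 3) ∈ K := by
    convert div_mem hu hba using 1
    field_simp
    ring
  refine ⟨hba, hlead, ?_, ?_⟩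
  · convert sub_mem (hK' (n + 3) 0 (by ring)) hlead using 1
    simp
  · convert sub_mem (hK' 0 (n + 3) (by ring)) (mul_mem hlead (pow_mem hba (n + 3))) using 1
    simp only [Nat.choose_zero_right, Nat.cast_one, pow_zero, one_mul, if_true,
      Nat.add_eq_zero_iff, OfNat.ofNat_ne_zero, and_false, if_false, add_zero, div_pow]
    field_simp
    ring

lemma exists_rep_three_of_coeff_trinomial_mem {K : Subfield ℂ} {d : ℕ} (hd : 3 ≤ d)
    {l₁ l₂ l₃ a b : ℂ} (hl₁ : l₁ ≠ 0) (ha : a ≠ 0) (hb : b ≠ 0)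
    (hK : ∀ m, coeff m (C l₁ * lform a b ^ d + C l₂ * X 0 ^ d + C l₃ * X 1 ^ d) ∈ K) :
    ∃ lam a' b' : Fin 3 → ℂ, (∀ j, lam j ∈ K ∧ a' j ∈ K ∧ b' j ∈ K) ∧
      C l₁ * lform a b ^ d + C l₂ * X 0 ^ d + C l₃ * X 1 ^ d =
        ∑ j, C (lam j) * lform (a' j) (b' j) ^ d := by
  obtain ⟨hba, hlead, hl₂, hl₃⟩ := trinomial_params_mem hd hl₁ ha hb hK
  refine ⟨![l₁ * a ^ d, l₂, l₃], ![1, 1, 0], ![b / a, 0, 1], ?_, ?_⟩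
  · intro j; fin_cases j <;> simp [hba, hlead, hl₂, hl₃]
  · have hscale : lform a b = C a * lform 1 (b / a) := by
      rw [lform, lform, map_one, one_mul, mul_add, ← mul_assoc, ← C_mul, mul_div_cancel₀ _ ha]
    rw [hscale, Fin.sum_univ_three]
    simp [mul_pow, mul_assoc, lform]

/-- If `f = λ₁(α₁x + β₁y)^d + λ₂x^d + λ₃y^d ∈ K[x,y]` with all of `λᵢ, α₁, β₁` nonzero
and `d ≥ 5`, then `L_K(f) = 3` and this representation of length 3 is projectively
unique: any `K`-linear combination of three `d`-th powers of linear forms over `K`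
equal to `f` uses the same three linear forms up to scaling. -/
theorem rank_three_unique (K : Subfield ℂ) (d : ℕ) (hd : 5 ≤ d)
    (l₁ l₂ l₃ a₁ b₁ : ℂ) (hl₁ : l₁ ≠ 0) (hl₂ : l₂ ≠ 0) (hl₃ : l₃ ≠ 0)
    (ha₁ : a₁ ≠ 0) (hb₁ : b₁ ≠ 0)
    (f : MvPolynomial (Fin 2) ℂ)
    (hf : f = C l₁ * lform a₁ b₁ ^ d + C l₂ * X 0 ^ d + C l₃ * X 1 ^ d)
    (hfK : ∀ m, f.coeff m ∈ K) :
    rankIn K d f = 3 ∧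
    ∀ mu a b : Fin 3 → ℂ, (∀ j, mu j ∈ K ∧ a j ∈ K ∧ b j ∈ K) →
      f = ∑ j, C (mu j) * lform (a j) (b j) ^ d →
      ∃ σ : Equiv.Perm (Fin 3), ∀ j, ∃ c : ℂ, c ≠ 0 ∧
        a j = c * ![a₁, 1, 0] (σ j) ∧ b j = c * ![b₁, 0, 1] (σ j) := by
  let P : Fin 3 → ℂ × ℂ := fun i => (![a₁, 1, 0] i, ![b₁, 0, 1] i)
  have hlam : ∀ i, ![l₁, l₂, l₃] i ≠ 0 := by
    intro i; fin_cases i <;> assumption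
  have hP₀ : ∀ i, P i ≠ 0 := by
    intro i; fin_cases i <;> simp [P, ha₁]
  have hP : Pairwise fun i i' => wedge (P i) (P i') ≠ 0 := by
    intro i i' h; fin_cases i <;> fin_cases i' <;> simp_all [P, wedge]
  have hfP : f = ∑ i, C (![l₁, l₂, l₃] i) * lform (P i).1 (P i).2 ^ d := by
    simp [hf, Fin.sum_univ_three, P, lform]
  have hmatch {m : ℕ} (hm : m ≤ 3) (μ a b : Fin m → ℂ)
      (h : f = ∑ j, C (μ j) * lform (a j) (b j) ^ d) :=
    exists_injective_wedge_eq_zero_of_sum_eq (w := fun j => (a j, b j)) (by omega)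
      (by simp only [Fintype.card_fin]; omega) hlam hP₀ hP (hfP ▸ h)
  have hrep := exists_rep_three_of_coeff_trinomial_mem (by omega) hl₁ ha₁ hb₁ (hf ▸ hfK)
  rw [← hf] at hrep
  refine ⟨le_antisymm (Nat.sInf_le hrep) (le_csInf ⟨3, hrep⟩ ?_), ?_⟩
  · rintro r ⟨μ, a, b, -, h⟩
    by_contra! hr
    obtain ⟨g, hg, -⟩ := hmatch hr.le μ a b h
    exact hr.not_ge (by simpa using Fintype.card_le_of_injective g hg)
  · rintro μ a b - h
    obtain ⟨g, hg, hgP⟩ := hmatch le_rfl μ a b h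
    let e := Equiv.ofBijective g hg.bijective_of_finite
    refine ⟨e.symm, fun j => ?_⟩
    obtain ⟨hw, hwP⟩ := hgP (e.symm j)
    rw [show g (e.symm j) = j from e.apply_symm_apply j] at hw hwP
    exact exists_eq_mul_of_wedge_eq_zero hw (hP₀ _) hwP
end

section
/- Let K ⊆ ℂ be a field, let d ≥ 5, and suppose p(x,y) = Σ_{i=1}^{3} λ_i(α_i x + β_i y)^d ∈ K[x,y] is an honest representation with λ_i, α_i, β_i ∈ ℂ, α_i ≠ 0 for i = 1,2,3, and L_K(p) > 3. Set γ_i = β_i/α_i and let u ∈ K be the discriminant of the cubic (t − γ_1)(t − γ_2)(t − γ_3), i.e. u = (γ_1−γ_2)^2(γ_1−γ_3)^2(γ_2−γ_3)^2. Then the cubic h(x,y) = (y − γ_1 x)(y − γ_2 x)(y − γ_3 x) has coefficients in K, at most one γ_i lies in K, and: (1) if no γ_i lies in K and √u ∈ K, then L_{K(γ_i)}(p) = 3 for each i ∈ {1,2,3}; (2) if no γ_i lies in K and √u ∉ K, then L_{K(γ_i, √u)}(p) = 3 for each i; (3) if exactly one γ_i lies in K, then L_{K(√u)}(p) = 3,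 and in the given representation one summand lies in K[x,y] while the other two are mapped to one another by the nontrivial K-automorphism of K(√u). -/
/-! Write `p = ∑ μᵢ (x + γᵢ y)^d`. Up to binomial coefficients the coefficients of `p` are the
power sums `pₙ = ∑ μᵢ γᵢⁿ`, so these lie in `K`. The Hankel determinant of `p₀, …, p₄` is
`μ₁μ₂μ₃` times the discriminant, so Cramer's rule puts the elementary symmetric functions of the
`γᵢ`, hence the cubic `h` and `u`, in `K`. Given one root `γᵢ` and `√u`, the other two are
`(e₁ - γᵢ ± √u / h'(γᵢ)) / 2`, and Lagrange interpolation recovers the `μᵢ` from `p₀, p₁, p₂`;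
so the representation is defined over any such field, where the rank is then exactly `3`, since
`p₀, …, p₄` of three distinct nodes cannot match those of at most two powers. Two `γᵢ` in `K`
would put the third in `K` too, against `L_K(p) > 3`. In case (3), the same interpolation in
`ℂ × ℂ`, on the subring of pairs `(a + b√u, a - b√u)`, makes the other two summands conjugate. -/

open MvPolynomial Finset

theorem Fin.sum_univ_three_of_pairwise_ne {M : Type*} [AddCommMonoid M] (f : Fin 3 → M)
    {i j l : Fin 3} (hij : i ≠ j) (hil : i ≠ l) (hjl : j ≠ l) :
    ∑ k, f k = f i + f j + f l := by
  fin_cases i <;> fin_cases j <;> fin_cases l <;> simp_all [Fin.sum_univ_three] <;> abel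

theorem Fin.exists_ne_ne_of_ne {i j : Fin 3} (hij : i ≠ j) : ∃ l, i ≠ l ∧ j ≠ l := by
  revert i j; decide

theorem Fin.exists_pairwise_ne (i : Fin 3) : ∃ j l, i ≠ j ∧ i ≠ l ∧ j ≠ l := by
  revert i; decide

theorem sq_mul_sub_eq_of_pairwise_ne {R : Type*} [CommRing R] (γ : Fin 3 → R)
    {i j l : Fin 3} (hij : i ≠ j) (hil : i ≠ l) (hjl : j ≠ l) :
    ((γ i - γ j) * (γ i - γ l) * (γ j - γ l)) ^ 2 =
      (γ 0 - γ 1) ^ 2 * (γ 0 - γ 2) ^ 2 * (γ 1 - γ 2) ^ 2 := by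
  fin_cases i <;> fin_cases j <;> fin_cases l <;> simp_all <;> ring

section PowerSums

variable {R σ : Type*} [CommRing R] [SetLike σ R] [SubringClass σ R] {S : σ} {a b c x y z : R}

theorem mem_of_powerSum_mem {w : R} (hw : w * ((x - y) * (x - z)) = 1) (hwS : w ∈ S)
    (hyz : y + z ∈ S) (hyz' : y * z ∈ S)
    (hp : ∀ n ≤ 2, a * x ^ n + b * y ^ n + c * z ^ n ∈ S) : a ∈ S := by
  -- Lagrange interpolation at `x`: the `b` and `c` terms cancel.
  have : a = w * ((a * x ^ 2 + b * y ^ 2 + c * z ^ 2)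
      - (y + z) * (a * x ^ 1 + b * y ^ 1 + c * z ^ 1)
      + y * z * (a * x ^ 0 + b * y ^ 0 + c * z ^ 0)) := by
    linear_combination (-a) * hw
  rw [this]
  exact mul_mem hwS <| add_mem (sub_mem (hp 2 le_rfl) (mul_mem hyz (hp 1 (by norm_num))))
    (mul_mem hyz' (hp 0 (by norm_num)))

theorem discr_mem_of_esymm_mem (h₁ : x + y + z ∈ S) (h₂ : x * y + x * z + y * z ∈ S)
    (h₃ : x * y * z ∈ S) : (x - y) ^ 2 * (x - z) ^ 2 * (y - z) ^ 2 ∈ S := by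
  have : (x - y) ^ 2 * (x - z) ^ 2 * (y - z) ^ 2 =
      (x + y + z) ^ 2 * (x * y + x * z + y * z) ^ 2 - 4 * (x * y + x * z + y * z) ^ 3
        - 4 * (x + y + z) ^ 3 * (x * y * z)
        + 18 * (x + y + z) * (x * y + x * z + y * z) * (x * y * z) - 27 * (x * y * z) ^ 2 := by
    ring
  rw [this]
  apply_rules [add_mem, sub_mem, mul_mem, pow_mem, ofNat_mem]

end PowerSums

section FieldPowerSums

variable {F : Type*} [Field F] {L : Subfield F} {a b c x y z : F}

theorem esymm_mem_of_powerSum_mem (ha : a ≠ 0) (hb : b ≠ 0) (hc : c ≠ 0)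
    (hxy : x ≠ y) (hxz : x ≠ z) (hyz : y ≠ z)
    (hp : ∀ n ≤ 5, a * x ^ n + b * y ^ n + c * z ^ n ∈ L) :
    x + y + z ∈ L ∧ x * y + x * z + y * z ∈ L ∧ x * y * z ∈ L := by
  obtain ⟨p, hp_def⟩ : ∃ p : ℕ → F, ∀ n, p n = a * x ^ n + b * y ^ n + c * z ^ n :=
    ⟨_, fun _ => rfl⟩
  simp only [← hp_def] at hp
  have h₀ := hp 0 (by norm_num); have h₁ := hp 1 (by norm_num); have h₂ := hp 2 (by norm_num)
  have h₃ := hp 3 (by norm_num); have h₄ := hp 4 (by norm_num); have h₅ := hp 5 le_rfl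
  clear hp
  -- `x, y, z` are the roots of `t³ - e₁t² + e₂t - e₃`, so `p (n + 3) = e₁ p (n + 2) - e₂ p (n + 1)
  -- + e₃ p n`; Cramer's rule solves these for `e₁, e₂, e₃`, the Hankel determinant being `abcV²`.
  set D := p 0 * (p 2 * p 4 - p 3 ^ 2) - p 1 * (p 1 * p 4 - p 2 * p 3)
    + p 2 * (p 1 * p 3 - p 2 ^ 2) with hD
  have hD₀ : D ≠ 0 := by
    have : D = a * b * c * ((x - y) * (x - z) * (y - z)) ^ 2 := by simp only [hD, hp_def]; ring
    rw [this]
    simp [ha, hb, hc, sub_ne_zero.2 hxy, sub_ne_zero.2 hxz, sub_ne_zero.2 hyz]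
  have hDL : D ∈ L := by apply_rules [add_mem, sub_mem, mul_mem, pow_mem]
  have of_mul_eq : ∀ e N : F, e * D = N → N ∈ L → e ∈ L := fun e N he hN => by
    simpa [← he, hD₀] using div_mem hN hDL
  refine ⟨of_mul_eq _ (p 0 * (p 2 * p 5 - p 3 * p 4) - p 1 * (p 1 * p 5 - p 2 * p 4)
      + p 3 * (p 1 * p 3 - p 2 ^ 2)) ?_ ?_,
    of_mul_eq _ (p 0 * (p 3 * p 5 - p 4 ^ 2) - p 1 * (p 2 * p 5 - p 3 * p 4)
      + p 2 * (p 2 * p 4 - p 3 ^ 2)) ?_ ?_,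
    of_mul_eq _ (p 1 * (p 3 * p 5 - p 4 ^ 2) - p 2 * (p 2 * p 5 - p 3 * p 4)
      + p 3 * (p 2 * p 4 - p 3 ^ 2)) ?_ ?_⟩
  all_goals first
    | (simp only [hD, hp_def]; ring1)
    | apply_rules only [add_mem, sub_mem, mul_mem, pow_mem, h₀, h₁, h₂, h₃, h₄, h₅]

theorem eq_or_eq_of_powerSum_eq {ρ₀ ρ₁ δ₀ δ₁ : F} (ha : a ≠ 0) (hxy : x ≠ y) (hxz : x ≠ z)
    (h : ∀ k ≤ 4, a * x ^ k + b * y ^ k + c * z ^ k = ρ₀ * δ₀ ^ k + ρ₁ * δ₁ ^ k) :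
    x = δ₀ ∨ x = δ₁ := by
  -- Apply both sides to the coefficients of `(t - y)(t - z)(t - δ₀)(t - δ₁)`.
  have key : a * ((x - y) * (x - z) * ((x - δ₀) * (x - δ₁))) = 0 := by
    linear_combination h 4 (by norm_num) - (y + z + δ₀ + δ₁) * h 3 (by norm_num)
      + (y * z + y * δ₀ + y * δ₁ + z * δ₀ + z * δ₁ + δ₀ * δ₁) * h 2 (by norm_num)
      - (y * z * δ₀ + y * z * δ₁ + y * δ₀ * δ₁ + z * δ₀ * δ₁) * h 1 (by norm_num)
      + y * z * δ₀ * δ₁ * h 0 (by norm_num)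
  simpa [ha, sub_ne_zero.2 hxy, sub_ne_zero.2 hxz, sub_eq_zero] using key

theorem not_injective_of_powerSum_eq {μ γ : Fin 3 → F} {ρ δ : Fin 2 → F} (hμ : ∀ i, μ i ≠ 0)
    (h : ∀ k ≤ 4, ∑ i, μ i * γ i ^ k = ∑ j, ρ j * δ j ^ k) : ¬ Function.Injective γ := by
  intro hγ
  have hδ : ∀ i, ∃ j, γ i = δ j := fun i => by
    obtain ⟨j, l, hij, hil, hjl⟩ := Fin.exists_pairwise_ne i
    have := eq_or_eq_of_powerSum_eq (hμ i) (hγ.ne hij) (hγ.ne hil) fun k hk => by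
      rw [← Fin.sum_univ_three_of_pairwise_ne (fun i => μ i * γ i ^ k) hij hil hjl, h k hk,
        Fin.sum_univ_two]
    rcases this with h₀ | h₁
    exacts [⟨0, h₀⟩, ⟨1, h₁⟩]
  choose f hf using hδ
  have := Fintype.card_le_of_injective f fun i i' e => hγ (by rw [hf, hf i', e])
  simp at this

theorem exists_mul_pow_eq_mul_pow (ν a b : F) (d : ℕ) :
    ∃ ρ δ : F, ∀ k < d, ν * (a ^ (d - k) * b ^ k) = ρ * δ ^ k := by
  rcases eq_or_ne a 0 with rfl | ha
  · exact ⟨0, 0, fun k hk => by simp [zero_pow (Nat.sub_ne_zero_of_lt hk)]⟩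
  · refine ⟨ν * a ^ d, b / a, fun k hk => ?_⟩
    rw [div_pow, ← pow_sub_mul_pow a hk.le]
    field_simp

end FieldPowerSums

section BinaryForms

noncomputable def xyExp (i j : ℕ) : Fin 2 →₀ ℕ := Finsupp.single 0 i + Finsupp.single 1 j

theorem xyExp_injective (d : ℕ) : Function.Injective fun k => xyExp (d - k) k := fun k k' h => by
  simpa [xyExp] using DFunLike.congr_fun h 1

theorem lform_pow (a b : ℂ) (d : ℕ) : lform a b ^ d =
    ∑ k ∈ range (d + 1), monomial (xyExp (d - k) k) (d.choose k * (a ^ (d - k) * b ^ k)) := by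
  rw [lform, add_comm, add_pow]
  refine sum_congr rfl fun k _ => ?_
  simp only [mul_pow, ← C_pow, X_pow_eq_monomial, xyExp, C_mul_monomial, monomial_mul,
    ← C_eq_coe_nat, mul_comm _ (C _), C_mul_monomial]
  rw [add_comm (Finsupp.single 1 k)]
  ring_nf

theorem coeff_lform_pow_s17 (a b : ℂ) {d k : ℕ} (hk : k ≤ d) :
    coeff (xyExp (d - k) k) (lform a b ^ d) = d.choose k * (a ^ (d - k) * b ^ k) := by
  rw [lform_pow, coeff_sum, sum_eq_single k]
  · simp
  · intro k' _ hk'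
    rw [coeff_monomial, if_neg ((xyExp_injective d).ne hk')]
  · simp [Nat.lt_succ_of_le hk]

theorem coeff_sum_C_mul_lform_pow {ι : Type*} [Fintype ι] (ν a b : ι → ℂ) {d k : ℕ} (hk : k ≤ d) :
    coeff (xyExp (d - k) k) (∑ i, C (ν i) * lform (a i) (b i) ^ d) =
      d.choose k * ∑ i, ν i * (a i ^ (d - k) * b i ^ k) := by
  simp only [coeff_sum, coeff_C_mul, coeff_lform_pow_s17 _ _ hk, mul_sum]
  exact sum_congr rfl fun i _ => by ring

theorem C_mul_lform_pow_eq (ν : ℂ) {a : ℂ} (b : ℂ) (ha : a ≠ 0) (d : ℕ) :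
    C ν * lform a b ^ d = C (ν * a ^ d) * lform 1 (b / a) ^ d := by
  have : lform a b = C a * lform 1 (b / a) := by
    simp only [lform, map_one, mul_add, ← mul_assoc, ← C_mul, mul_one, mul_div_cancel₀ _ ha]
  rw [this, mul_pow, ← C_pow, ← mul_assoc, ← C_mul]

theorem coeff_C_mul_linear_pow_mem {R : Type*} [CommRing R] {S : Subring R} {ν a b : R}
    (hν : ν ∈ S) (ha : a ∈ S) (hb : b ∈ S) (d : ℕ) (m : Fin 2 →₀ ℕ) :
    coeff m (C ν * (C a * X 0 + C b * X 1) ^ d) ∈ S := by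
  have : (C ν * (C a * X 0 + C b * X 1) ^ d : MvPolynomial (Fin 2) R) =
      map S.subtype (C ⟨ν, hν⟩ * (C ⟨a, ha⟩ * X 0 + C ⟨b, hb⟩ * X 1) ^ d) := by
    simp
  rw [this, coeff_map]
  exact SetLike.coe_mem _

end BinaryForms

section Rank

variable {d : ℕ} {μ γ : Fin 3 → ℂ}

theorem three_le_of_sum_eq (hd : 5 ≤ d) (hμ : ∀ i, μ i ≠ 0) (hγ : Function.Injective γ)
    {r : ℕ} (ν a b : Fin r → ℂ)
    (h : ∑ i, C (μ i) * lform 1 (γ i) ^ d = ∑ j, C (ν j) * lform (a j) (b j) ^ d) : 3 ≤ r := by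
  by_contra! hr
  choose ρ δ hρδ using fun j => exists_mul_pow_eq_mul_pow (ν j) (a j) (b j) d
  have hsum : ∀ k ≤ 4, ∑ i, μ i * γ i ^ k = ∑ j, ρ j * δ j ^ k := fun k hk => by
    have := congrArg (coeff (xyExp (d - k) k)) h
    rw [coeff_sum_C_mul_lform_pow _ _ _ (by omega), coeff_sum_C_mul_lform_pow _ _ _ (by omega)]
      at this
    simp only [one_pow, one_mul] at this
    rw [← sum_congr rfl fun j _ => hρδ j k (by omega)]
    exact mul_left_cancel₀ (Nat.cast_ne_zero.2 (Nat.choose_pos (by omega)).ne') this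
  obtain ⟨ρ', δ', h'⟩ : ∃ ρ' δ' : Fin 2 → ℂ, ∀ k, ∑ j, ρ j * δ j ^ k = ∑ j, ρ' j * δ' j ^ k := by
    interval_cases r
    · exact ⟨0, 0, by simp⟩
    · exact ⟨![ρ 0, 0], ![δ 0, 0], by simp⟩
    · exact ⟨ρ, δ, fun _ => rfl⟩
  exact not_injective_of_powerSum_eq hμ (fun k hk => (hsum k hk).trans (h' k)) hγ

theorem rankIn_sum_eq_three {L : Subfield ℂ} (hd : 5 ≤ d) (hμ : ∀ i, μ i ≠ 0)
    (hγ : Function.Injective γ) (hμL : ∀ i, μ i ∈ L) (hγL : ∀ i, γ i ∈ L) :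
    rankIn L d (∑ i, C (μ i) * lform 1 (γ i) ^ d) = 3 := by
  have h3 : 3 ∈ {r : ℕ | ∃ lam a b : Fin r → ℂ, (∀ j, lam j ∈ L ∧ a j ∈ L ∧ b j ∈ L) ∧
      ∑ i, C (μ i) * lform 1 (γ i) ^ d = ∑ j, C (lam j) * lform (a j) (b j) ^ d} :=
    ⟨μ, 1, γ, fun j => ⟨hμL j, one_mem L, hγL j⟩, rfl⟩
  refine le_antisymm (Nat.sInf_le h3) (le_csInf ⟨3, h3⟩ ?_)
  rintro r ⟨ν, a, b, -, h⟩
  exact three_le_of_sum_eq hd hμ hγ ν a b h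

end Rank

theorem le_adj (K : Subfield ℂ) (S : Set ℂ) : K ≤ adj K S :=
  fun _ hx => Subfield.subset_closure (Or.inl hx)

theorem mem_adj {K : Subfield ℂ} {S : Set ℂ} {x : ℂ} (hx : x ∈ S) : x ∈ adj K S :=
  Subfield.subset_closure (Or.inr hx)

section ConjPair

variable {K : Subfield ℂ} {s : ℂ}

theorem conjPair.fst_mem {z w : ℂ} (h : conjPair K s z w) (hs : s ∈ K) : z ∈ K := by
  obtain ⟨a, b, ha, hb, rfl, -⟩ := h
  exact add_mem ha (mul_mem hb hs)

theorem conjPair.mul_mem {z w : ℂ} (h : conjPair K s z w) (hs : s ^ 2 ∈ K) : z * w ∈ K := by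
  obtain ⟨a, b, ha, hb, rfl, rfl⟩ := h
  convert sub_mem (pow_mem ha 2) (MulMemClass.mul_mem (pow_mem hb 2) hs) using 1
  ring

theorem conjPair_of_sub_eq {y z t : ℂ} (hyz : y + z ∈ K) (ht : t ∈ K) (h : y - z = t * s) :
    conjPair K s y z :=
  ⟨(y + z) / 2, t / 2, div_mem hyz (ofNat_mem K 2), div_mem ht (ofNat_mem K 2),
    by linear_combination h / 2, by linear_combination -h / 2⟩

theorem conjPair_of_sq_eq {x y z : ℂ} (hxy : x ≠ y) (hxz : x ≠ z) (hx : x ∈ K)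
    (h₁ : x + y + z ∈ K) (h₂ : x * y + x * z + y * z ∈ K)
    (hs : s ^ 2 = ((x - y) * (x - z) * (y - z)) ^ 2) : conjPair K s y z := by
  -- `(x - y) * (x - z)` is the derivative at `x` of the cubic with roots `x, y, z`.
  have hT : (x - y) * (x - z) ∈ K := by
    convert sub_mem (add_mem (mul_mem (ofNat_mem K 3) (pow_mem hx 2)) h₂)
      (mul_mem (mul_mem (ofNat_mem K 2) hx) h₁) using 1
    ring
  have hT₀ : (x - y) * (x - z) ≠ 0 := mul_ne_zero (sub_ne_zero.2 hxy) (sub_ne_zero.2 hxz)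
  have hyz : y + z ∈ K := by convert sub_mem h₁ hx using 1; ring
  have : ((y - z) * ((x - y) * (x - z))) ^ 2 = s ^ 2 := by rw [hs]; ring
  rcases sq_eq_sq_iff_eq_or_eq_neg.1 this with h | h
  · exact conjPair_of_sub_eq hyz (inv_mem hT) (by field_simp; linear_combination h)
  · exact conjPair_of_sub_eq hyz (neg_mem (inv_mem hT)) (by field_simp; linear_combination h)

/-- The two projections play the roles of the two embeddings of `K(s)` into `ℂ`. -/
def conjPairSubring (K : Subfield ℂ) {s : ℂ} (hs : s ^ 2 ∈ K) : Subring (ℂ × ℂ) where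
  carrier := {zw | conjPair K s zw.1 zw.2}
  mul_mem' := by
    rintro ⟨-, -⟩ ⟨-, -⟩ ⟨a, b, ha, hb, rfl, rfl⟩ ⟨a', b', ha', hb', rfl, rfl⟩
    exact ⟨a * a' + b * b' * s ^ 2, a * b' + a' * b,
      add_mem (mul_mem ha ha') (mul_mem (mul_mem hb hb') hs),
      add_mem (mul_mem ha hb') (mul_mem ha' hb), by simp; ring, by simp; ring⟩
  one_mem' := ⟨1, 0, one_mem K, zero_mem K, by simp, by simp⟩
  add_mem' := by
    rintro ⟨-, -⟩ ⟨-, -⟩ ⟨a, b, ha, hb, rfl, rfl⟩ ⟨a', b', ha', hb', rfl, rfl⟩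
    exact ⟨a + a', b + b', add_mem ha ha', add_mem hb hb', by simp; ring, by simp; ring⟩
  zero_mem' := ⟨0, 0, zero_mem K, zero_mem K, by simp, by simp⟩
  neg_mem' := by
    rintro ⟨-, -⟩ ⟨a, b, ha, hb, rfl, rfl⟩
    exact ⟨-a, -b, neg_mem ha, neg_mem hb, by simp; ring, by simp; ring⟩

variable {hs : s ^ 2 ∈ K}

theorem diag_mem_conjPairSubring {x : ℂ} (hx : x ∈ K) : (x, x) ∈ conjPairSubring K hs :=
  ⟨x, 0, hx, zero_mem K, by ring, by ring⟩

theorem swap_mem_conjPairSubring {zw : ℂ × ℂ} (h : zw ∈ conjPairSubring K hs) :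
    zw.swap ∈ conjPairSubring K hs := by
  obtain ⟨a, b, ha, hb, h₁, h₂⟩ := h
  exact ⟨a, -b, ha, neg_mem hb, by rw [Prod.fst_swap, h₂]; ring, by rw [Prod.snd_swap, h₁]; ring⟩

theorem inv_mem_conjPairSubring {z w : ℂ} (h : (z, w) ∈ conjPairSubring K hs) (hz : z ≠ 0)
    (hw : w ≠ 0) : (z⁻¹, w⁻¹) ∈ conjPairSubring K hs := by
  have : (z⁻¹, w⁻¹) = (w, z) * ((z * w)⁻¹, (z * w)⁻¹) := by
    ext <;> simp <;> field_simp
  rw [this]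
  exact mul_mem (swap_mem_conjPairSubring h)
    (diag_mem_conjPairSubring (inv_mem (conjPair.mul_mem h hs)))

theorem conjPair_coeff {ν ν' g g' : ℂ} (hs : s ^ 2 ∈ K) (hν : conjPair K s ν ν')
    (hg : conjPair K s g g') (d : ℕ) (m : Fin 2 →₀ ℕ) :
    conjPair K s (coeff m (C ν * lform 1 g ^ d)) (coeff m (C ν' * lform 1 g' ^ d)) := by
  have key := coeff_C_mul_linear_pow_mem (S := conjPairSubring K hs) (ν := (ν, ν')) (b := (g, g'))
    hν (one_mem _) hg d m
  have hfst : map (RingHom.fst ℂ ℂ) (C (ν, ν') * (C 1 * X 0 + C (g, g') * X 1) ^ d) =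
      C ν * lform 1 g ^ d := by
    simp [lform]
  have hsnd : map (RingHom.snd ℂ ℂ) (C (ν, ν') * (C 1 * X 0 + C (g, g') * X 1) ^ d) =
      C ν' * lform 1 g' ^ d := by
    simp [lform]
  rw [← hfst, ← hsnd, coeff_map, coeff_map]
  exact key

end ConjPair

theorem coeff_cubic_mem {R : Type*} [CommRing R] {S : Subring R} {x y z : R}
    (h₁ : x + y + z ∈ S) (h₂ : x * y + x * z + y * z ∈ S) (h₃ : x * y * z ∈ S)
    (m : Fin 2 →₀ ℕ) :
    coeff m ((X 1 - C x * X 0) * (X 1 - C y * X 0) * (X 1 - C z * X 0) :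
      MvPolynomial (Fin 2) R) ∈ S := by
  have : ((X 1 - C x * X 0) * (X 1 - C y * X 0) * (X 1 - C z * X 0) : MvPolynomial (Fin 2) R) =
      map S.subtype (X 1 ^ 3 - C ⟨_, h₁⟩ * X 0 * X 1 ^ 2 + C ⟨_, h₂⟩ * X 0 ^ 2 * X 1
        - C ⟨_, h₃⟩ * X 0 ^ 3) := by
    simp only [map_sub, map_add, map_mul, map_pow, map_X, map_C, Subring.subtype_apply]
    ring
  rw [this, coeff_map]
  exact SetLike.coe_mem _

/-- `∑ i, μ i * (x + γ i * y) ^ d` is an honest representation, with `d ≥ 5`, of a form with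
coefficients in `K`. -/
structure HonestRep (K : Subfield ℂ) (d : ℕ) (μ γ : Fin 3 → ℂ) : Prop where
  five_le : 5 ≤ d
  ne_zero : ∀ i, μ i ≠ 0
  injective : Function.Injective γ
  coeff_mem : ∀ m, coeff m (∑ i, C (μ i) * lform 1 (γ i) ^ d) ∈ K

namespace HonestRep

variable {K L : Subfield ℂ} {d : ℕ} {μ γ : Fin 3 → ℂ} {i j l : Fin 3} {s : ℂ}

theorem of_honest {lam al be : Fin 3 → ℂ} (hd : 5 ≤ d) (hal : ∀ i, al i ≠ 0)
    (hγ : ∀ i, γ i = be i / al i)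
    (honest : ∀ i j, i ≠ j → lam i * lam j * (al i * be j - al j * be i) ≠ 0)
    (hK : ∀ m, coeff m (∑ i, C (lam i) * lform (al i) (be i) ^ d) ∈ K) :
    HonestRep K d (fun i => lam i * al i ^ d) γ where
  five_le := hd
  ne_zero i := by
    obtain ⟨j, -, hij, -, -⟩ := Fin.exists_pairwise_ne i
    exact mul_ne_zero (left_ne_zero_of_mul (left_ne_zero_of_mul (honest i j hij)))
      (pow_ne_zero _ (hal i))
  injective i j hγij := by
    by_contra hij
    refine honest i j hij (mul_eq_zero_of_right _ ?_)
    rw [hγ, hγ, div_eq_div_iff (hal i) (hal j)] at hγij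
    linear_combination -hγij
  coeff_mem := by simpa only [C_mul_lform_pow_eq _ _ (hal _), ← hγ] using hK

theorem mono (h : HonestRep K d μ γ) (hKL : K ≤ L) : HonestRep L d μ γ :=
  ⟨h.five_le, h.ne_zero, h.injective, fun m => hKL (h.coeff_mem m)⟩

theorem powerSum_mem (h : HonestRep K d μ γ) {n : ℕ} (hn : n ≤ d) : ∑ i, μ i * γ i ^ n ∈ K := by
  have := h.coeff_mem (xyExp (d - n) n)
  rw [coeff_sum_C_mul_lform_pow _ _ _ hn] at this
  have hc : (d.choose n : ℂ) ≠ 0 := Nat.cast_ne_zero.2 (Nat.choose_pos hn).ne'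
  simpa [hc] using div_mem this (natCast_mem K (d.choose n))

theorem powerSum_mem_of_pairwise_ne (h : HonestRep K d μ γ) (hij : i ≠ j) (hil : i ≠ l)
    (hjl : j ≠ l) {n : ℕ} (hn : n ≤ d) :
    μ i * γ i ^ n + μ j * γ j ^ n + μ l * γ l ^ n ∈ K := by
  rw [← Fin.sum_univ_three_of_pairwise_ne (fun k => μ k * γ k ^ n) hij hil hjl]
  exact h.powerSum_mem hn

theorem esymm_mem (h : HonestRep K d μ γ) (hij : i ≠ j) (hil : i ≠ l) (hjl : j ≠ l) :
    γ i + γ j + γ l ∈ K ∧ γ i * γ j + γ i * γ l + γ j * γ l ∈ K ∧ γ i * γ j * γ l ∈ K :=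
  esymm_mem_of_powerSum_mem (h.ne_zero i) (h.ne_zero j) (h.ne_zero l) (h.injective.ne hij)
    (h.injective.ne hil) (h.injective.ne hjl) fun _ hn =>
      h.powerSum_mem_of_pairwise_ne hij hil hjl (hn.trans h.five_le)

theorem weight_mem (h : HonestRep K d μ γ) (hi : γ i ∈ K) : μ i ∈ K := by
  obtain ⟨j, l, hij, hil, hjl⟩ := Fin.exists_pairwise_ne i
  obtain ⟨h₁, h₂, -⟩ := h.esymm_mem hij hil hjl
  have hadd : γ j + γ l ∈ K := by convert sub_mem h₁ hi using 1; ring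
  have hmul : γ j * γ l ∈ K := by convert sub_mem h₂ (mul_mem hi hadd) using 1; ring
  have hD : (γ i - γ j) * (γ i - γ l) ∈ K := by
    convert add_mem (sub_mem (pow_mem hi 2) (mul_mem hi hadd)) hmul using 1; ring
  have hD₀ : (γ i - γ j) * (γ i - γ l) ≠ 0 :=
    mul_ne_zero (sub_ne_zero.2 (h.injective.ne hij)) (sub_ne_zero.2 (h.injective.ne hil))
  exact mem_of_powerSum_mem (inv_mul_cancel₀ hD₀) (inv_mem hD) hadd hmul fun _ hn =>
    h.powerSum_mem_of_pairwise_ne hij hil hjl (by linarith [h.five_le])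

theorem rankIn_eq_three (h : HonestRep K d μ γ) (hγ : ∀ i, γ i ∈ K) :
    rankIn K d (∑ i, C (μ i) * lform 1 (γ i) ^ d) = 3 :=
  rankIn_sum_eq_three h.five_le h.ne_zero h.injective (fun i => h.weight_mem (hγ i)) hγ

theorem eq_of_mem_of_mem (h : HonestRep K d μ γ)
    (hrk : 3 < rankIn K d (∑ i, C (μ i) * lform 1 (γ i) ^ d)) (hi : γ i ∈ K) (hj : γ j ∈ K) :
    i = j := by
  by_contra hij
  refine hrk.ne' (h.rankIn_eq_three fun k => ?_)
  rcases eq_or_ne k i with rfl | hki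
  · exact hi
  rcases eq_or_ne k j with rfl | hkj
  · exact hj
  convert sub_mem (sub_mem (h.esymm_mem hij hki.symm hkj.symm).1 hi) hj using 1
  ring

theorem discr_mem (h : HonestRep K d μ γ) :
    (γ 0 - γ 1) ^ 2 * (γ 0 - γ 2) ^ 2 * (γ 1 - γ 2) ^ 2 ∈ K :=
  let ⟨h₁, h₂, h₃⟩ := h.esymm_mem (i := 0) (j := 1) (l := 2) (by decide) (by decide) (by decide)
  discr_mem_of_esymm_mem h₁ h₂ h₃

theorem coeff_cubic_mem (h : HonestRep K d μ γ) (m : Fin 2 →₀ ℕ) :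
    coeff m ((X 1 - C (γ 0) * X 0) * (X 1 - C (γ 1) * X 0) * (X 1 - C (γ 2) * X 0) :
      MvPolynomial (Fin 2) ℂ) ∈ K :=
  let ⟨h₁, h₂, h₃⟩ := h.esymm_mem (i := 0) (j := 1) (l := 2) (by decide) (by decide) (by decide)
  _root_.coeff_cubic_mem (S := K.toSubring) h₁ h₂ h₃ m

theorem conjPair_of_mem (h : HonestRep K d μ γ)
    (hsu : s ^ 2 = (γ 0 - γ 1) ^ 2 * (γ 0 - γ 2) ^ 2 * (γ 1 - γ 2) ^ 2) (hi : γ i ∈ K)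
    (hij : i ≠ j) (hil : i ≠ l) (hjl : j ≠ l) : conjPair K s (γ j) (γ l) :=
  let ⟨h₁, h₂, _⟩ := h.esymm_mem hij hil hjl
  conjPair_of_sq_eq (h.injective.ne hij) (h.injective.ne hil) hi h₁ h₂
    (hsu.trans (sq_mul_sub_eq_of_pairwise_ne γ hij hil hjl).symm)

theorem mem_of_mem_of_sq_eq (h : HonestRep K d μ γ) (hs : s ∈ K)
    (hsu : s ^ 2 = (γ 0 - γ 1) ^ 2 * (γ 0 - γ 2) ^ 2 * (γ 1 - γ 2) ^ 2) (hi : γ i ∈ K)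
    (j : Fin 3) : γ j ∈ K := by
  rcases eq_or_ne i j with rfl | hij
  · exact hi
  obtain ⟨l, hil, hjl⟩ := Fin.exists_ne_ne_of_ne hij
  exact (h.conjPair_of_mem hsu hi hij hil hjl).fst_mem hs

theorem conjPair_weight (h : HonestRep K d μ γ)
    (hsu : s ^ 2 = (γ 0 - γ 1) ^ 2 * (γ 0 - γ 2) ^ 2 * (γ 1 - γ 2) ^ 2) (hi : γ i ∈ K)
    (hij : i ≠ j) (hil : i ≠ l) (hjl : j ≠ l) : conjPair K s (μ j) (μ l) := by
  have hs : s ^ 2 ∈ K := hsu ▸ h.discr_mem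
  have hγ : (γ j, γ l) ∈ conjPairSubring K hs := h.conjPair_of_mem hsu hi hij hil hjl
  have hγi : (γ i, γ i) ∈ conjPairSubring K hs := diag_mem_conjPairSubring hi
  have hne : ∀ {a b}, a ≠ b → γ a - γ b ≠ 0 := fun hab => sub_ne_zero.2 (h.injective.ne hab)
  show (μ j, μ l) ∈ conjPairSubring K hs
  -- Lagrange interpolation in `ℂ × ℂ` at the nodes `(γ j, γ l)`, `(γ l, γ j)`, `(γ i, γ i)`.
  refine mem_of_powerSum_mem (S := conjPairSubring K hs) (b := (μ l, μ j)) (c := (μ i, μ i))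
    (x := (γ j, γ l)) (y := (γ l, γ j)) (z := (γ i, γ i))
    (w := (((γ j - γ l) * (γ j - γ i))⁻¹, ((γ l - γ j) * (γ l - γ i))⁻¹)) ?_ ?_
    (add_mem (swap_mem_conjPairSubring hγ) hγi) (mul_mem (swap_mem_conjPairSubring hγ) hγi)
    fun n hn => ?_
  · ext
    exacts [inv_mul_cancel₀ (mul_ne_zero (hne hjl) (hne hij.symm)),
      inv_mul_cancel₀ (mul_ne_zero (hne hjl.symm) (hne hil.symm))]
  · refine inv_mem_conjPairSubring ?_ (mul_ne_zero (hne hjl) (hne hij.symm))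
      (mul_ne_zero (hne hjl.symm) (hne hil.symm))
    exact mul_mem (sub_mem hγ (swap_mem_conjPairSubring hγ)) (sub_mem hγ hγi)
  · convert diag_mem_conjPairSubring (hs := hs)
      (h.powerSum_mem_of_pairwise_ne hij hil hjl (hn.trans (by linarith [h.five_le]))) using 1
    ext <;> simp <;> ring

end HonestRep

/-- **Binary forms of Waring rank 3.** Suppose `p = Σᵢ λᵢ(αᵢx + βᵢy)^d ∈ K[x,y]` is an
honest representation with `d ≥ 5`, `αᵢ ≠ 0`, and `L_K(p) > 3`. With `γᵢ = βᵢ/αᵢ` and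
`u` the discriminant of `(t-γ₁)(t-γ₂)(t-γ₃)`: the cubic `(y-γ₁x)(y-γ₂x)(y-γ₃x)` has
coefficients in `K`, `u ∈ K`, at most one `γᵢ` lies in `K`, and the three case
conclusions hold. -/
theorem rank_three_classification (K : Subfield ℂ) (d : ℕ) (hd : 5 ≤ d)
    (lam al be : Fin 3 → ℂ) (hal : ∀ i, al i ≠ 0)
    (p : MvPolynomial (Fin 2) ℂ)
    (hp : p = ∑ i, C (lam i) * lform (al i) (be i) ^ d)
    (hpK : ∀ m, p.coeff m ∈ K)
    (honest : ∀ i j, i ≠ j → lam i * lam j * (al i * be j - al j * be i) ≠ 0)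
    (hrk : 3 < rankIn K d p)
    (γ : Fin 3 → ℂ) (hγ : ∀ i, γ i = be i / al i)
    (u : ℂ) (hu : u = (γ 0 - γ 1) ^ 2 * (γ 0 - γ 2) ^ 2 * (γ 1 - γ 2) ^ 2) :
    (∀ m, ((X 1 - C (γ 0) * X 0) * (X 1 - C (γ 1) * X 0) * (X 1 - C (γ 2) * X 0) :
      MvPolynomial (Fin 2) ℂ).coeff m ∈ K) ∧
    u ∈ K ∧
    (∀ i j, γ i ∈ K → γ j ∈ K → i = j) ∧
    -- Case 1: no `γᵢ` in `K` and `√u ∈ K`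
    ((∀ i, γ i ∉ K) → (∃ s ∈ K, s ^ 2 = u) →
      ∀ i, rankIn (adj K {γ i}) d p = 3) ∧
    -- Case 2: no `γᵢ` in `K` and `√u ∉ K`
    ((∀ i, γ i ∉ K) → (∀ s : ℂ, s ^ 2 = u → s ∉ K) →
      ∀ i, ∀ s : ℂ, s ^ 2 = u → rankIn (adj K {γ i, s}) d p = 3) ∧
    -- Case 3: exactly one `γᵢ` in `K`
    ((∃! i, γ i ∈ K) → ∀ s : ℂ, s ^ 2 = u →
      rankIn (adj K {s}) d p = 3 ∧
      ∃ i j l : Fin 3, i ≠ j ∧ i ≠ l ∧ j ≠ l ∧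
        (∀ m, (C (lam i) * lform (al i) (be i) ^ d).coeff m ∈ K) ∧
        (∀ m, conjPair K s ((C (lam j) * lform (al j) (be j) ^ d).coeff m)
          ((C (lam l) * lform (al l) (be l) ^ d).coeff m))) := by
  have h : HonestRep K d (fun i => lam i * al i ^ d) γ := .of_honest hd hal hγ honest (hp ▸ hpK)
  have hterm : ∀ i, C (lam i) * lform (al i) (be i) ^ d =
      C (lam i * al i ^ d) * lform 1 (γ i) ^ d := fun i => by
    rw [hγ, C_mul_lform_pow_eq _ _ (hal i)]
  rw [sum_congr rfl fun i _ => hterm i] at hp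
  subst hp hu
  have rank_eq : ∀ {L : Subfield ℂ}, K ≤ L → ∀ s ∈ L,
      s ^ 2 = (γ 0 - γ 1) ^ 2 * (γ 0 - γ 2) ^ 2 * (γ 1 - γ 2) ^ 2 → ∀ i, γ i ∈ L →
      rankIn L d (∑ i, C (lam i * al i ^ d) * lform 1 (γ i) ^ d) = 3 :=
    fun hKL s hs hsu i hi =>
      (h.mono hKL).rankIn_eq_three ((h.mono hKL).mem_of_mem_of_sq_eq hs hsu hi)
  refine ⟨h.coeff_cubic_mem, h.discr_mem, fun i j => h.eq_of_mem_of_mem hrk, ?_, ?_, ?_⟩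
  · rintro - ⟨s, hs, hsu⟩ i
    exact rank_eq (le_adj K _) s (le_adj K _ hs) hsu i (mem_adj rfl)
  · rintro - - i s hsu
    exact rank_eq (le_adj K _) s (mem_adj (by simp)) hsu i (mem_adj (by simp))
  · rintro ⟨i, hi, -⟩ s hsu
    obtain ⟨j, l, hij, hil, hjl⟩ := Fin.exists_pairwise_ne i
    refine ⟨rank_eq (le_adj K _) s (mem_adj rfl) hsu i (le_adj K _ hi), i, j, l, hij, hil, hjl,
      fun m => ?_, fun m => ?_⟩
    · rw [hterm]
      exact coeff_C_mul_linear_pow_mem (S := K.toSubring) (h.weight_mem hi) (one_mem K) hi d m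
    · rw [hterm, hterm]
      exact conjPair_coeff (hsu ▸ h.discr_mem) (h.conjPair_weight hsu hi hij hil hjl)
        (h.conjPair_of_mem hsu hi hij hil hjl) d m
end
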